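/- arXiv:1004.0393 — 4 statements merged into one kernel-verified Lean document; each statement's English description precedes it below -/
import Mathlib

section
/- A curve Z ⊂ ℝ³ projects onto a curve X ⊂ ℝ² by a finite (central) projection if and only if there exist real numbers c₁, c₂, c₃ such that the projective curve {[z₁+c₁ : z₂+c₂ : z₃+c₃] ∈ ℙ² : (z₁,z₂,z₃) ∈ Z} is PGL(3)-equivalent to the projective closure [X] of X in ℙ². -/
/-! A finite projection `P` with left block `A` and last column `A c` factors as
`P = A · [I₃ | 0] · B(c)`, i.e. `P · (z, 1) = A · (z + c)`. Invertibility of `A` makes every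
finite projection of this shape (take `c = A⁻¹ · (last column of P)`), and conversely `[A | A c]`
is a finite projection for every invertible `A`; so the two kinds of maps `ℝ³ ⇢ ℙ²` coincide,
and with them their images of `Z`. -/

/-- The left 3×3 submatrix of a 3×4 matrix. -/
def leftBlock (P : Matrix (Fin 3) (Fin 4) ℝ) : Matrix (Fin 3) (Fin 3) ℝ :=
  fun i j => P i j.castSucc

/-- The embedding of the plane ℝ² into ℙ², (x,y) ↦ [x : y : 1]. -/
noncomputable def embedPlane (x : Fin 2 → ℝ) : Projectivization ℝ (Fin 3 → ℝ) :=
  Projectivization.mk ℝ ![x 0, x 1, 1] (by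
    intro h
    have h2 := congrFun h 2
    simp at h2)

open Matrix

theorem Matrix.mulVec_snoc {m R : Type*} [Semiring R] {n : ℕ} (P : Matrix m (Fin (n + 1)) R)
    (v : Fin n → R) (a : R) :
    P *ᵥ Fin.snoc v a = P.submatrix id Fin.castSucc *ᵥ v + fun i => P i (Fin.last n) * a := by
  ext i
  simp [mulVec, dotProduct, Fin.sum_univ_castSucc]

theorem Projectivization.setOf_mk_congr {K V α : Type*} [DivisionRing K] [AddCommGroup V]
    [Module K V] {S : Set α} {f g : α → V} (hfg : ∀ a, f a = g a) :
    {q : Projectivization K V | ∃ a ∈ S, ∃ h : f a ≠ 0, q = Projectivization.mk K (f a) h} =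
      {q | ∃ a ∈ S, ∃ h : g a ≠ 0, q = Projectivization.mk K (g a) h} := by
  obtain rfl := funext hfg
  rfl

theorem mulVec_homogenize_eq_mulVec_translate {P : Matrix (Fin 3) (Fin 4) ℝ} {A : Matrix (Fin 3) (Fin 3) ℝ}
    {c : Fin 3 → ℝ} (hA : leftBlock P = A) (hc : (fun i => P i 3) = A *ᵥ c) (z : Fin 3 → ℝ) :
    P *ᵥ ![z 0, z 1, z 2, 1] = A *ᵥ ![z 0 + c 0, z 1 + c 1, z 2 + c 2] := by
  have hsnoc : ![z 0, z 1, z 2, 1] = Fin.snoc z 1 := by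
    ext i; fin_cases i <;> rfl
  have hadd : ![z 0 + c 0, z 1 + c 1, z 2 + c 2] = z + c := by
    ext i; fin_cases i <;> rfl
  subst hA
  rw [hsnoc, mulVec_snoc, hadd, mulVec_add, ← hc]
  simp only [mul_one]
  rfl

/-- Finite projection criterion: a curve Z ⊆ ℝ³ projects onto a curve X ⊆ ℝ² by a
finite (central) projection iff there exist c₁, c₂, c₃ ∈ ℝ such that the projective
curve {[z₁+c₁ : z₂+c₂ : z₃+c₃] : z ∈ Z} ⊆ ℙ² is PGL(3)-equivalent to [X]. -/
theorem finite_projection_criterion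
    (Z : Set (Fin 3 → ℝ)) (X : Set (Fin 2 → ℝ)) :
    (∃ P : Matrix (Fin 3) (Fin 4) ℝ, IsUnit (leftBlock P).det ∧
      {q : Projectivization ℝ (Fin 3 → ℝ) | ∃ z ∈ Z,
        ∃ h : P.mulVec ![z 0, z 1, z 2, 1] ≠ 0,
          q = Projectivization.mk ℝ (P.mulVec ![z 0, z 1, z 2, 1]) h}
        = embedPlane '' X) ↔
    (∃ (c₁ c₂ c₃ : ℝ) (A : Matrix (Fin 3) (Fin 3) ℝ), IsUnit A.det ∧
      {q : Projectivization ℝ (Fin 3 → ℝ) | ∃ z ∈ Z,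
        ∃ h : A.mulVec ![z 0 + c₁, z 1 + c₂, z 2 + c₃] ≠ 0,
          q = Projectivization.mk ℝ (A.mulVec ![z 0 + c₁, z 1 + c₂, z 2 + c₃]) h}
        = embedPlane '' X) := by
  constructor
  · rintro ⟨P, hP, hset⟩
    set c := (leftBlock P)⁻¹ *ᵥ fun i => P i 3
    have hc : (fun i => P i 3) = leftBlock P *ᵥ c := by
      rw [mulVec_mulVec, mul_nonsing_inv _ hP, one_mulVec]
    refine ⟨c 0, c 1, c 2, leftBlock P, hP, hset ▸ ?_⟩
    exact Projectivization.setOf_mk_congr fun z => (mulVec_homogenize_eq_mulVec_translate rfl hc z).symm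
  · rintro ⟨c₁, c₂, c₃, A, hA, hset⟩
    let P : Matrix (Fin 3) (Fin 4) ℝ := Matrix.of fun i => Fin.snoc (A i) ((A *ᵥ ![c₁, c₂, c₃]) i)
    have hPA : leftBlock P = A := by
      ext i j; simp [P, leftBlock]
    have hc : (fun i => P i 3) = A *ᵥ ![c₁, c₂, c₃] := by
      ext i; exact Fin.snoc_last (α := fun _ => ℝ) (n := 3) _ (A i)
    refine ⟨P, hPA ▸ hA, hset ▸ ?_⟩
    exact Projectivization.setOf_mk_congr (mulVec_homogenize_eq_mulVec_translate hPA hc)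
end

section
/- A curve Z ⊂ ℝ³ projects onto a curve X ⊂ ℝ² by an affine (parallel) projection if and only if there exist real numbers c₁, c₂ and an ordered triple (i,j,k) ∈ {(1,2,3), (1,3,2), (2,3,1)} such that the planar curve {(z_i + c₁ z_k, z_j + c₂ z_k) : (z₁,z₂,z₃) ∈ Z} is A(2)-equivalent (i.e., related by an invertible affine map of the plane) to X. -/
/-!
A rank-two matrix `L : Matrix (Fin 2) (Fin 3) ℝ` has an invertible `2 × 2` block, on some
columns `i < j` (its three minors are the coordinates of the cross product of its rows). With `k`
the remaining column and `A` that block, `L = A * P` where `P z = (z i + c₁ z k, z j + c₂ z k)`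
and `(c₁, c₂)` is `A⁻¹` applied to the `k`-th column of `L`. Conversely `M * P` has rank two for every invertible `M`, since `P`
has a right inverse.
-/

open Matrix

section NormalProjection

variable {R : Type*} [Semiring R] {n : Type*} [DecidableEq n]

def normalProjection (i j k : n) (c₁ c₂ : R) : Matrix (Fin 2) n R :=
  of ![Pi.single i 1 + c₁ • Pi.single k 1, Pi.single j 1 + c₂ • Pi.single k 1]

theorem normalProjection_mulVec [Fintype n] (i j k : n) (c₁ c₂ : R) (z : n → R) :
    normalProjection i j k c₁ c₂ *ᵥ z = ![z i + c₁ * z k, z j + c₂ * z k] := by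
  ext r
  fin_cases r <;> exact (add_dotProduct _ _ _).trans (by simp)

end NormalProjection

theorem image_mul_mulVec_add {R : Type*} [NonUnitalSemiring R] {m n p : Type*} [Fintype n]
    [Fintype p] (M : Matrix m n R) (P : Matrix n p R) (v : m → R) (Z : Set (p → R)) :
    (fun z => (M * P) *ᵥ z + v) '' Z = (fun x => M *ᵥ x + v) '' ((P *ᵥ ·) '' Z) := by
  rw [Set.image_image]
  simp_rw [mulVec_mulVec]

variable {K : Type*} [Field K]

theorem Matrix.linearIndependent_row_of_rank_eq_card {m n : Type*} [Fintype m] [Fintype n]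
    {M : Matrix m n K} (h : M.rank = Fintype.card m) : LinearIndependent K M.row := by
  rw [linearIndependent_iff_card_eq_finrank_span, Set.finrank, ← rank_eq_finrank_span_row, h]

section NormalProjection

variable {n : Type*} [DecidableEq n] {i j k : n}

theorem rank_normalProjection [Fintype n] (hij : i ≠ j) (hki : k ≠ i) (hkj : k ≠ j) (c₁ c₂ : K) :
    (normalProjection i j k c₁ c₂).rank = 2 := by
  set P := normalProjection i j k c₁ c₂
  set Q := (of ![Pi.single i (1 : K), Pi.single j 1])ᵀ
  have hPQ : P * Q = 1 := by
    ext r t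
    fin_cases r <;> fin_cases t <;>
      simp [P, Q, normalProjection, mul_apply, Pi.single_apply, hij, hij.symm, hki.symm, hkj.symm]
  refine le_antisymm (by simpa using rank_le_card_height P) ?_
  simpa [hPQ] using rank_mul_le_left P Q

theorem eq_submatrix_mul_normalProjection (L : Matrix (Fin 2) n K)
    (hcover : ∀ s, s = i ∨ s = j ∨ s = k) (hij : i ≠ j) (hki : k ≠ i) (hkj : k ≠ j)
    (hL : IsUnit (L.submatrix id ![i, j]).det) :
    ∃ c₁ c₂ : K, L = L.submatrix id ![i, j] * normalProjection i j k c₁ c₂ := by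
  set c := (L.submatrix id ![i, j])⁻¹ *ᵥ fun r => L r k
  have hc : L.submatrix id ![i, j] *ᵥ c = fun r => L r k := by
    rw [mulVec_mulVec, mul_nonsing_inv _ hL, one_mulVec]
  refine ⟨c 0, c 1, ?_⟩
  ext r s
  have hck : L r i * c 0 + L r j * c 1 = L r k := by
    simpa [mulVec, dotProduct, Fin.sum_univ_two] using congrFun hc r
  rcases hcover s with rfl | rfl | rfl <;>
    simp [normalProjection, mul_apply, Fin.sum_univ_two, hij, hij.symm, hki, hkj, hck]

end NormalProjection

theorem exists_isUnit_det_submatrix {L : Matrix (Fin 2) (Fin 3) K} (hL : L.rank = 2) :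
    IsUnit (L.submatrix id ![0, 1]).det ∨ IsUnit (L.submatrix id ![0, 2]).det ∨
      IsUnit (L.submatrix id ![1, 2]).det := by
  have hrows : LinearIndependent K ![L 0, L 1] := by
    have hrow : ![L 0, L 1] = L.row := by ext r s; fin_cases r <;> rfl
    exact hrow ▸ linearIndependent_row_of_rank_eq_card (by simpa using hL)
  have hcross := crossProduct_ne_zero_iff_linearIndependent.mpr hrows
  contrapose! hcross
  simp only [Fin.isValue, det_fin_two, submatrix_apply, id_eq, cons_val_zero, cons_val_one,
    isUnit_iff_ne_zero, ne_eq, not_not, cross_apply, cons_eq_zero_iff, zero_empty, and_true]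
    at hcross ⊢
  obtain ⟨h01, h02, h12⟩ := hcross
  exact ⟨h12, by linear_combination -h02, h01⟩

theorem exists_eq_mul_normalProjection {L : Matrix (Fin 2) (Fin 3) K} (hL : L.rank = 2) :
    ∃ (c₁ c₂ : K) (i j k : Fin 3),
      ((i, j, k) = (0, 1, 2) ∨ (i, j, k) = (0, 2, 1) ∨ (i, j, k) = (1, 2, 0)) ∧
      ∃ M : Matrix (Fin 2) (Fin 2) K, IsUnit M.det ∧ L = M * normalProjection i j k c₁ c₂ := by
  rcases exists_isUnit_det_submatrix hL with h | h | h
  · obtain ⟨c₁, c₂, hc⟩ := eq_submatrix_mul_normalProjection L (k := 2) (by decide) (by decide)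
      (by decide) (by decide) h
    exact ⟨c₁, c₂, 0, 1, 2, by simp, _, h, hc⟩
  · obtain ⟨c₁, c₂, hc⟩ := eq_submatrix_mul_normalProjection L (k := 1) (by decide) (by decide)
      (by decide) (by decide) h
    exact ⟨c₁, c₂, 0, 2, 1, by simp, _, h, hc⟩
  · obtain ⟨c₁, c₂, hc⟩ := eq_submatrix_mul_normalProjection L (k := 0) (by decide) (by decide)
      (by decide) (by decide) h
    exact ⟨c₁, c₂, 1, 2, 0, by simp, _, h, hc⟩

/-- Affine projection criterion: Z ⊆ ℝ³ projects onto X ⊆ ℝ² by an affine (parallel)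
projection iff there exist c₁, c₂ ∈ ℝ and (i,j,k) ∈ {(1,2,3),(1,3,2),(2,3,1)} such
that {(z_i + c₁ z_k, z_j + c₂ z_k) : z ∈ Z} is A(2)-equivalent to X. -/
theorem affine_projection_criterion
    (Z : Set (Fin 3 → ℝ)) (X : Set (Fin 2 → ℝ)) :
    (∃ (L : Matrix (Fin 2) (Fin 3) ℝ) (v : Fin 2 → ℝ),
      L.rank = 2 ∧ (fun z => L.mulVec z + v) '' Z = X) ↔
    (∃ (c₁ c₂ : ℝ) (i j k : Fin 3),
      ((i, j, k) = ((0 : Fin 3), (1 : Fin 3), (2 : Fin 3)) ∨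
       (i, j, k) = ((0 : Fin 3), (2 : Fin 3), (1 : Fin 3)) ∨
       (i, j, k) = ((1 : Fin 3), (2 : Fin 3), (0 : Fin 3))) ∧
      ∃ (M : Matrix (Fin 2) (Fin 2) ℝ) (b : Fin 2 → ℝ), IsUnit M.det ∧
        (fun x => M.mulVec x + b) ''
          ((fun z : Fin 3 → ℝ => ![z i + c₁ * z k, z j + c₂ * z k]) '' Z) = X) := by
  have hP (i j k : Fin 3) (c₁ c₂ : ℝ) : (normalProjection i j k c₁ c₂ *ᵥ ·) =
      fun z : Fin 3 → ℝ => ![z i + c₁ * z k, z j + c₂ * z k] :=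
    funext (normalProjection_mulVec i j k c₁ c₂)
  constructor
  · rintro ⟨L, v, hL, rfl⟩
    obtain ⟨c₁, c₂, i, j, k, hijk, M, hM, rfl⟩ := exists_eq_mul_normalProjection hL
    exact ⟨c₁, c₂, i, j, k, hijk, M, v, hM, by rw [← hP, image_mul_mulVec_add]⟩
  · rintro ⟨c₁, c₂, i, j, k, hijk, M, b, hM, rfl⟩
    have hdistinct : i ≠ j ∧ k ≠ i ∧ k ≠ j := by
      rcases hijk with h | h | h <;> obtain ⟨rfl, rfl, rfl⟩ := (by simpa using h) <;> decide
    refine ⟨M * normalProjection i j k c₁ c₂, b, ?_, by rw [← hP, image_mul_mulVec_add]⟩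
    rw [rank_mul_eq_right_of_isUnit_det _ _ hM,
      rank_normalProjection hdistinct.1 hdistinct.2.1 hdistinct.2.2]
end

section
/- A curve Z ⊂ ℝ³ projects onto a curve X ⊂ ℝ² by an affine projection if and only if there exist b, c, f ∈ ℝ such that X is A(2)-equivalent to one of the following planar curves: (A) {(z₂, z₃) : (z₁,z₂,z₃) ∈ Z}; (B) {(z₁ + b·z₂, z₃) : (z₁,z₂,z₃) ∈ Z}; or (C) {(z₁ + c·z₃, z₂ + f·z₃) : (z₁,z₂,z₃) ∈ Z}. -/
/-!
Every affine map `z ↦ L z + v` with `L` a rank-two `2 × 3` matrix factors as `L = M * E` with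
`M` invertible and `E` in reduced row echelon form. The pivots of `E` sit in two of the three
columns, which leaves exactly the three shapes `(A)`, `(B)`, `(C)`; and `M` together with `v` is
the planar affine equivalence. The pivot columns are the first pair (in the order `01, 02, 12`)
with nonzero `2 × 2` minor; some minor is nonzero because `L` has a right inverse (Cauchy–Binet).
Conversely `M * E` has rank two whenever `M` is invertible.
-/

open Matrix

namespace Matrix

theorem rank_eq_card_height_iff_exists_mul_eq_one {K m n : Type*} [Field K] [Fintype m]
    [Fintype n] [DecidableEq m] (L : Matrix m n K) :
    L.rank = Fintype.card m ↔ ∃ S : Matrix n m K, L * S = 1 := by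
  constructor
  · intro h
    classical
    have hrange : LinearMap.range L.mulVecLin = ⊤ :=
      Submodule.eq_top_of_finrank_eq (by rw [← rank, h, Module.finrank_fintype_fun_eq_card])
    obtain ⟨g, hg⟩ := L.mulVecLin.exists_rightInverse_of_surjective hrange
    refine ⟨LinearMap.toMatrix' g, ?_⟩
    rw [← LinearMap.toMatrix'_toLin' L, ← LinearMap.toMatrix'_comp, Matrix.toLin'_apply', hg,
      LinearMap.toMatrix'_id]
  · rintro ⟨S, hS⟩
    refine le_antisymm L.rank_le_card_height ?_
    calc Fintype.card m = (L * S).rank := by rw [hS, rank_one]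
      _ ≤ L.rank := rank_mul_le_left L S

theorem image_affine_image_mulVec {R l m n : Type*} [CommRing R] [Fintype m] [Fintype n]
    {P : Matrix m n R} {g : (n → R) → m → R} (hg : ∀ z, g z = P *ᵥ z) (M : Matrix l m R)
    (w : l → R) (Z : Set (n → R)) :
    (fun x => M *ᵥ x + w) '' (g '' Z) = (fun z => (M * P) *ᵥ z + w) '' Z := by
  simp only [Set.image_image, hg, mulVec_mulVec]

end Matrix

section Echelon

variable {R : Type*} [CommRing R]

/- The reduced row echelon forms of rank-two `2 × 3` matrices, with pivots in columns
`{1, 2}`, `{0, 2}` and `{0, 1}` respectively. -/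
def echelonA : Matrix (Fin 2) (Fin 3) R := !![0, 1, 0; 0, 0, 1]

def echelonB (b : R) : Matrix (Fin 2) (Fin 3) R := !![1, b, 0; 0, 0, 1]

def echelonC (c f : R) : Matrix (Fin 2) (Fin 3) R := !![1, 0, c; 0, 1, f]

theorem echelonA_mulVec (z : Fin 3 → R) : echelonA *ᵥ z = ![z 1, z 2] := by
  ext i; fin_cases i <;> simp [echelonA, mulVec, dotProduct, Fin.sum_univ_three]

theorem echelonB_mulVec (b : R) (z : Fin 3 → R) : echelonB b *ᵥ z = ![z 0 + b * z 1, z 2] := by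
  ext i; fin_cases i <;> simp [echelonB, mulVec, dotProduct, Fin.sum_univ_three]

theorem echelonC_mulVec (c f : R) (z : Fin 3 → R) :
    echelonC c f *ᵥ z = ![z 0 + c * z 2, z 1 + f * z 2] := by
  ext i; fin_cases i <;> simp [echelonC, mulVec, dotProduct, Fin.sum_univ_three]

theorem det_mul_eq_sum_minors (L : Matrix (Fin 2) (Fin 3) R) (S : Matrix (Fin 3) (Fin 2) R) :
    (L * S).det = (L.submatrix id ![0, 1]).det * (S.submatrix ![0, 1] id).det +
      (L.submatrix id ![0, 2]).det * (S.submatrix ![0, 2] id).det +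
      (L.submatrix id ![1, 2]).det * (S.submatrix ![1, 2] id).det := by
  simp only [det_fin_two, submatrix_apply, id_eq, Matrix.mul_apply, Fin.sum_univ_three,
    cons_val_zero, cons_val_one, cons_val_fin_one]
  ring

-- Laplace expansion of the `3 × 3` determinant of `L` with one row repeated.
theorem minors_smul_cols_eq_zero (L : Matrix (Fin 2) (Fin 3) R) :
    (L.submatrix id ![1, 2]).det • L.col 0 - (L.submatrix id ![0, 2]).det • L.col 1 +
      (L.submatrix id ![0, 1]).det • L.col 2 = 0 := by
  ext i
  fin_cases i <;>
  · simp only [det_fin_two, submatrix_apply, id_eq, cons_val_zero, cons_val_one, cons_val_fin_one,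
      Fin.zero_eta, Fin.mk_one, Pi.add_apply, Pi.sub_apply, Pi.smul_apply, col_apply, smul_eq_mul,
      Pi.zero_apply]
    ring

variable {L : Matrix (Fin 2) (Fin 3) R}

theorem eq_mul_echelonA (h : L.col 0 = 0) :
    L = L.submatrix id ![1, 2] * (echelonA : Matrix (Fin 2) (Fin 3) R) := by
  ext i j
  have hi := congrFun h i
  fin_cases j <;> simp_all [echelonA, Matrix.mul_apply, Fin.sum_univ_two]

theorem eq_mul_echelonB {b : R} (h : L.col 1 = b • L.col 0) :
    L = L.submatrix id ![0, 2] * echelonB b := by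
  ext i j
  have hi := congrFun h i
  fin_cases j <;> simp_all [echelonB, Matrix.mul_apply, Fin.sum_univ_two, mul_comm]

theorem eq_mul_echelonC {c f : R} (h : L.col 2 = c • L.col 0 + f • L.col 1) :
    L = L.submatrix id ![0, 1] * echelonC c f := by
  ext i j
  have hi := congrFun h i
  fin_cases j <;> simp_all [echelonC, Matrix.mul_apply, Fin.sum_univ_two, mul_comm]

end Echelon

section RankTwo

variable {K : Type*} [Field K]

theorem rank_echelonA : (echelonA : Matrix (Fin 2) (Fin 3) K).rank = 2 :=
  (rank_eq_card_height_iff_exists_mul_eq_one _).2 ⟨!![0, 0; 1, 0; 0, 1], by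
    ext i j; fin_cases i <;> fin_cases j <;> simp [echelonA, Matrix.mul_apply, Fin.sum_univ_three]⟩

theorem rank_echelonB (b : K) : (echelonB b).rank = 2 :=
  (rank_eq_card_height_iff_exists_mul_eq_one _).2 ⟨!![1, 0; 0, 0; 0, 1], by
    ext i j; fin_cases i <;> fin_cases j <;> simp [echelonB, Matrix.mul_apply, Fin.sum_univ_three]⟩

theorem rank_echelonC (c f : K) : (echelonC c f).rank = 2 :=
  (rank_eq_card_height_iff_exists_mul_eq_one _).2 ⟨!![1, 0; 0, 1; 0, 0], by
    ext i j; fin_cases i <;> fin_cases j <;> simp [echelonC, Matrix.mul_apply, Fin.sum_univ_three]⟩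

theorem exists_isUnit_det_and_eq_mul_echelon (L : Matrix (Fin 2) (Fin 3) K) (hL : L.rank = 2) :
    ∃ M : Matrix (Fin 2) (Fin 2) K, IsUnit M.det ∧
      (L = M * echelonA ∨ (∃ b, L = M * echelonB b) ∨ ∃ c f, L = M * echelonC c f) := by
  obtain ⟨S, hS⟩ := (rank_eq_card_height_iff_exists_mul_eq_one L).1 hL
  have hdet := det_mul_eq_sum_minors L S
  rw [hS, det_one] at hdet
  have hrel := minors_smul_cols_eq_zero L
  set d₀₁ := (L.submatrix id ![0, 1]).det
  set d₀₂ := (L.submatrix id ![0, 2]).det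
  set d₁₂ := (L.submatrix id ![1, 2]).det
  rcases eq_or_ne d₀₁ 0 with h₀₁ | h₀₁
  · rcases eq_or_ne d₀₂ 0 with h₀₂ | h₀₂
    · have h₁₂ : d₁₂ ≠ 0 := by
        intro h₁₂
        simp [h₀₁, h₀₂, h₁₂] at hdet
      refine ⟨_, h₁₂.isUnit, Or.inl (eq_mul_echelonA ?_)⟩
      simpa [h₀₁, h₀₂, h₁₂] using hrel
    · refine ⟨_, h₀₂.isUnit, Or.inr (Or.inl ⟨d₁₂ / d₀₂, eq_mul_echelonB ?_⟩)⟩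
      apply smul_right_injective _ h₀₂
      simp only [smul_smul, mul_div_cancel₀ _ h₀₂]
      linear_combination (norm := module) -hrel + h₀₁ • L.col 2
  · refine ⟨_, h₀₁.isUnit, Or.inr (Or.inr ⟨-d₁₂ / d₀₁, d₀₂ / d₀₁, eq_mul_echelonC ?_⟩)⟩
    apply smul_right_injective _ h₀₁
    simp only [smul_add, smul_smul, mul_div_cancel₀ _ h₀₁]
    linear_combination (norm := module) hrel

end RankTwo

/-- Reduced affine projection criterion: Z ⊆ ℝ³ projects onto X ⊆ ℝ² by an affine
projection iff there exist b, c, f ∈ ℝ such that X is A(2)-equivalent to one of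
(A) {(z₂,z₃)}, (B) {(z₁+b·z₂, z₃)}, or (C) {(z₁+c·z₃, z₂+f·z₃)}. -/
theorem reduced_affine_projection_criterion
    (Z : Set (Fin 3 → ℝ)) (X : Set (Fin 2 → ℝ)) :
    (∃ (L : Matrix (Fin 2) (Fin 3) ℝ) (v : Fin 2 → ℝ),
      L.rank = 2 ∧ (fun z => L.mulVec z + v) '' Z = X) ↔
    (∃ b c f : ℝ,
      (∃ (M : Matrix (Fin 2) (Fin 2) ℝ) (w : Fin 2 → ℝ), IsUnit M.det ∧
        (fun x => M.mulVec x + w) ''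
          ((fun z : Fin 3 → ℝ => ![z 1, z 2]) '' Z) = X) ∨
      (∃ (M : Matrix (Fin 2) (Fin 2) ℝ) (w : Fin 2 → ℝ), IsUnit M.det ∧
        (fun x => M.mulVec x + w) ''
          ((fun z : Fin 3 → ℝ => ![z 0 + b * z 1, z 2]) '' Z) = X) ∨
      (∃ (M : Matrix (Fin 2) (Fin 2) ℝ) (w : Fin 2 → ℝ), IsUnit M.det ∧
        (fun x => M.mulVec x + w) ''
          ((fun z : Fin 3 → ℝ => ![z 0 + c * z 2, z 1 + f * z 2]) '' Z) = X)) := by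
  have hA := fun z => (echelonA_mulVec (R := ℝ) z).symm
  have hB := fun b z => (echelonB_mulVec (R := ℝ) b z).symm
  have hC := fun c f z => (echelonC_mulVec (R := ℝ) c f z).symm
  constructor
  · rintro ⟨L, v, hL, rfl⟩
    obtain ⟨M, hM, rfl | ⟨b, rfl⟩ | ⟨c, f, rfl⟩⟩ := exists_isUnit_det_and_eq_mul_echelon L hL
    · exact ⟨0, 0, 0, .inl ⟨M, v, hM, image_affine_image_mulVec hA M v Z⟩⟩
    · exact ⟨b, 0, 0, .inr (.inl ⟨M, v, hM, image_affine_image_mulVec (hB b) M v Z⟩)⟩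
    · exact ⟨0, c, f, .inr (.inr ⟨M, v, hM, image_affine_image_mulVec (hC c f) M v Z⟩)⟩
  · rintro ⟨b, c, f, ⟨M, w, hM, rfl⟩ | ⟨M, w, hM, rfl⟩ | ⟨M, w, hM, rfl⟩⟩
    · exact ⟨M * echelonA, w, by rw [rank_mul_eq_right_of_isUnit_det _ _ hM, rank_echelonA],
        (image_affine_image_mulVec hA M w Z).symm⟩
    · exact ⟨M * echelonB b, w, by rw [rank_mul_eq_right_of_isUnit_det _ _ hM, rank_echelonB],
        (image_affine_image_mulVec (hB b) M w Z).symm⟩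
    · exact ⟨M * echelonC c f, w, by rw [rank_mul_eq_right_of_isUnit_det _ _ hM, rank_echelonC],
        (image_affine_image_mulVec (hC c f) M w Z).symm⟩
end

section
/- A list Z = (z¹, …, zᵐ) of m points in ℝ³ projects onto a list X = (x¹, …, xᵐ) of m points in ℝ² by an affine projection if and only if there exist c₁, c₂ ∈ ℝ, an ordered triple (i,j,k) ∈ {(1,2,3), (1,3,2), (2,3,1)}, and an invertible affine transformation A of ℝ² such that xʳ = A(z_iʳ + c₁ z_kʳ, z_jʳ + c₂ z_kʳ) for all r = 1, …, m. -/
/-!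
Every rank-2 matrix `L : K^{2×3}` has two linearly independent columns `i, j`, since the 2×2
minors of `L` are the coordinates of the cross product of its (independent) rows. With
`M` the submatrix of these two columns, `M⁻¹ L` has the unit vectors in columns `i, j`, so
`L = M * P` where `P w = (w i + c₁ w k, w j + c₂ w k)`. Conversely such a product with `M`
invertible has rank 2, because `P` is surjective.
-/

namespace Matrix

variable {R K m n : Type*}

def obliqueProj [Semiring R] [DecidableEq n] (i j k : n) (c₁ c₂ : R) : Matrix (Fin 2) n R :=
  of ![Pi.single i 1 + c₁ • Pi.single k 1, Pi.single j 1 + c₂ • Pi.single k 1]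

@[simp]
theorem obliqueProj_mulVec [CommSemiring R] [Fintype n] [DecidableEq n] (i j k : n) (c₁ c₂ : R)
    (w : n → R) : obliqueProj i j k c₁ c₂ *ᵥ w = ![w i + c₁ * w k, w j + c₂ * w k] := by
  ext t
  fin_cases t <;>
    simp only [obliqueProj, mulVec, of_apply, Fin.zero_eta, Fin.mk_one, cons_val_zero, cons_val_one,
      add_dotProduct, smul_dotProduct, single_one_dotProduct, smul_eq_mul]

theorem surjective_obliqueProj_mulVec [CommSemiring R] [Fintype n] [DecidableEq n] {i j k : n}
    (hij : i ≠ j) (hki : k ≠ i) (hkj : k ≠ j) (c₁ c₂ : R) :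
    Function.Surjective (obliqueProj i j k c₁ c₂).mulVec := fun y =>
  ⟨Pi.single i (y 0) + Pi.single j (y 1), by
    ext t; fin_cases t <;> simp [hij, hij.symm, hki, hkj]⟩

theorem rank_eq_card_of_surjective_mulVec [Field K] [Fintype m] [Fintype n] (A : Matrix m n K)
    (h : Function.Surjective A.mulVec) : A.rank = Fintype.card m := by
  rw [rank, LinearMap.range_eq_top.2 h, finrank_top, Module.finrank_fintype_fun_eq_card]

theorem linearIndependent_row_of_rank_eq_card_s18 [Field K] [Fintype m] [Fintype n] {A : Matrix m n K}
    (h : A.rank = Fintype.card m) : LinearIndependent K A.row := by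
  rw [linearIndependent_iff_card_eq_finrank_span, ← h, rank_eq_finrank_span_row, Set.finrank]

theorem cross_rows_eq_dets [CommRing R] (L : Matrix (Fin 2) (Fin 3) R) :
    L 0 ⨯₃ L 1 = ![(L.submatrix id ![1, 2]).det, -(L.submatrix id ![0, 2]).det,
      (L.submatrix id ![0, 1]).det] := by
  ext t
  fin_cases t <;> simp [cross_apply, det_fin_two]

theorem exists_isUnit_det_submatrix_of_rank_eq_two [Field K] {L : Matrix (Fin 2) (Fin 3) K}
    (hL : L.rank = 2) :
    ∃ i j k : Fin 3, ((i, j, k) = ((0 : Fin 3), (1 : Fin 3), (2 : Fin 3)) ∨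
       (i, j, k) = ((0 : Fin 3), (2 : Fin 3), (1 : Fin 3)) ∨
       (i, j, k) = ((1 : Fin 3), (2 : Fin 3), (0 : Fin 3))) ∧
      IsUnit (L.submatrix id ![i, j]).det := by
  have hrows : LinearIndependent K ![L 0, L 1] := by
    convert linearIndependent_row_of_rank_eq_card_s18 hL
    ext t; fin_cases t <;> rfl
  by_contra! h
  apply crossProduct_ne_zero_iff_linearIndependent.2 hrows
  simp only [isUnit_iff_ne_zero, not_not] at h
  rw [cross_rows_eq_dets, h 0 1 2 (by simp), h 0 2 1 (by simp), h 1 2 0 (by simp)]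
  simp

theorem exists_eq_submatrix_mul_obliqueProj [Field K] (L : Matrix (Fin 2) (Fin 3) K)
    {i j k : Fin 3} (hij : i ≠ j) (hki : k ≠ i) (hkj : k ≠ j)
    (hM : IsUnit (L.submatrix id ![i, j]).det) :
    ∃ c₁ c₂ : K, L = L.submatrix id ![i, j] * obliqueProj i j k c₁ c₂ := by
  set M := L.submatrix id ![i, j]
  set c := M⁻¹ *ᵥ L.col k
  have hc : M *ᵥ c = L.col k := by
    rw [mulVec_mulVec, mul_nonsing_inv _ hM, one_mulVec]
  refine ⟨c 0, c 1, ext fun t l => ?_⟩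
  obtain rfl | rfl | rfl : l = i ∨ l = j ∨ l = k := by omega
  · simp [mul_apply, Fin.sum_univ_two, obliqueProj, M, hij, hki.symm]
  · simp [mul_apply, Fin.sum_univ_two, obliqueProj, M, hij.symm, hkj.symm]
  · simpa [mul_apply, mulVec, dotProduct, Fin.sum_univ_two, obliqueProj, M, hkj, hki]
      using (congrFun hc t).symm

theorem rank_eq_two_iff_exists_eq_mul_obliqueProj [Field K] (L : Matrix (Fin 2) (Fin 3) K) :
    L.rank = 2 ↔ ∃ (c₁ c₂ : K) (i j k : Fin 3),
      ((i, j, k) = ((0 : Fin 3), (1 : Fin 3), (2 : Fin 3)) ∨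
       (i, j, k) = ((0 : Fin 3), (2 : Fin 3), (1 : Fin 3)) ∨
       (i, j, k) = ((1 : Fin 3), (2 : Fin 3), (0 : Fin 3))) ∧
      ∃ M : Matrix (Fin 2) (Fin 2) K, IsUnit M.det ∧ L = M * obliqueProj i j k c₁ c₂ := by
  have hne : ∀ {i j k : Fin 3}, ((i, j, k) = ((0 : Fin 3), (1 : Fin 3), (2 : Fin 3)) ∨
      (i, j, k) = ((0 : Fin 3), (2 : Fin 3), (1 : Fin 3)) ∨
      (i, j, k) = ((1 : Fin 3), (2 : Fin 3), (0 : Fin 3))) → i ≠ j ∧ k ≠ i ∧ k ≠ j := by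
    rintro i j k (h | h | h) <;> simp_all [Prod.ext_iff]
  constructor
  · intro hL
    obtain ⟨i, j, k, hijk, hM⟩ := exists_isUnit_det_submatrix_of_rank_eq_two hL
    obtain ⟨hij, hki, hkj⟩ := hne hijk
    obtain ⟨c₁, c₂, hL⟩ := exists_eq_submatrix_mul_obliqueProj L hij hki hkj hM
    exact ⟨c₁, c₂, i, j, k, hijk, _, hM, hL⟩
  · rintro ⟨c₁, c₂, i, j, k, hijk, M, hM, rfl⟩
    obtain ⟨hij, hki, hkj⟩ := hne hijk
    rw [rank_mul_eq_right_of_isUnit_det _ _ hM, rank_eq_card_of_surjective_mulVec _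
      (surjective_obliqueProj_mulVec hij hki hkj c₁ c₂), Fintype.card_fin]

end Matrix

open Matrix

/-- Affine projection criterion for lists of points: (z¹,…,zᵐ) in ℝ³ projects onto
(x¹,…,xᵐ) in ℝ² by an affine projection iff there exist c₁, c₂ ∈ ℝ, an ordered triple
(i,j,k) ∈ {(1,2,3),(1,3,2),(2,3,1)}, and an invertible affine transformation A of ℝ²
with xʳ = A(z_iʳ + c₁ z_kʳ, z_jʳ + c₂ z_kʳ) for all r. -/
theorem affine_projection_criterion_for_point_lists
    (m : ℕ) (z : Fin m → Fin 3 → ℝ) (x : Fin m → Fin 2 → ℝ) :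
    (∃ (L : Matrix (Fin 2) (Fin 3) ℝ) (v : Fin 2 → ℝ),
      L.rank = 2 ∧ ∀ r, x r = L.mulVec (z r) + v) ↔
    (∃ (c₁ c₂ : ℝ) (i j k : Fin 3),
      ((i, j, k) = ((0 : Fin 3), (1 : Fin 3), (2 : Fin 3)) ∨
       (i, j, k) = ((0 : Fin 3), (2 : Fin 3), (1 : Fin 3)) ∨
       (i, j, k) = ((1 : Fin 3), (2 : Fin 3), (0 : Fin 3))) ∧
      ∃ (M : Matrix (Fin 2) (Fin 2) ℝ) (b : Fin 2 → ℝ), IsUnit M.det ∧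
        ∀ r, x r = M.mulVec ![z r i + c₁ * z r k, z r j + c₂ * z r k] + b) := by
  constructor
  · rintro ⟨L, v, hL, hx⟩
    obtain ⟨c₁, c₂, i, j, k, hijk, M, hM, rfl⟩ :=
      (rank_eq_two_iff_exists_eq_mul_obliqueProj L).1 hL
    refine ⟨c₁, c₂, i, j, k, hijk, M, v, hM, fun r => ?_⟩
    rw [hx r, ← mulVec_mulVec, obliqueProj_mulVec]
  · rintro ⟨c₁, c₂, i, j, k, hijk, M, b, hM, hx⟩
    refine ⟨M * obliqueProj i j k c₁ c₂, b,
      (rank_eq_two_iff_exists_eq_mul_obliqueProj _).2 ⟨c₁, c₂, i, j, k, hijk, M, hM, rfl⟩,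
      fun r => ?_⟩
    rw [hx r, ← mulVec_mulVec, obliqueProj_mulVec]
end
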